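/- arXiv:2501.16281 — 8 statements merged into one kernel-verified Lean document; each statement's English description precedes it below -/
import Mathlib

section
/- Let X be a set and f : X → X a map such that, for every positive integer n, the set Fix(f^n) of fixed points of the n-th iterate of f is finite. Then the sequence (|Fix(f^n)|)_{n≥1} satisfies Gauss congruences for every prime: for every prime number p, every integer m ≥ 1 and every integer s ≥ 0, one has |Fix(f^{m p^{s+1}})| ≡ |Fix(f^{m p^s})| (mod p^{s+1}). -/
/-!
Replacing `f` by `f^[m]` reduces the statement to `m = 1`. The map `f` permutes the finite set
`A = Fix(f^[p^(s+1)])`, and as a permutation `σ` of `A` it satisfies `σ ^ p^(s+1) = 1`.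
A point of `A` not fixed by `σ ^ p^s` has minimal period exactly `p^(s+1)`, so the cyclic group
`⟨σ⟩` (of order `p^(s+1)` as soon as such a point exists) acts freely on these points. Hence
their number `|Fix(f^[p^(s+1)])| - |Fix(f^[p^s])|` is a multiple of `p^(s+1)`.
-/

open Function MulAction Subgroup

theorem MulAction.card_dvd_card_of_stabilizer_eq_bot {G X : Type*} [Group G] [MulAction G X]
    (h : ∀ x : X, stabilizer G x = ⊥) : Nat.card G ∣ Nat.card X := by
  rw [Nat.card_congr (selfEquivOrbitsQuotientProd h), Nat.card_prod]
  exact dvd_mul_left _ _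

theorem MulAction.prime_pow_dvd_card_movedBy {G α : Type*} [Group G] [MulAction G α]
    {p s : ℕ} [Fact p.Prime] {g : G} (hg : g ^ p ^ (s + 1) = 1) :
    p ^ (s + 1) ∣ Nat.card ↥(fixedBy α (g ^ p ^ s))ᶜ := by
  by_cases hgs : g ^ p ^ s = 1
  · simp [hgs]
  have horder : orderOf g = p ^ (s + 1) := orderOf_eq_prime_pow hgs hg
  let moved : SubMulAction (zpowers g) α :=
    { carrier := (fixedBy α (g ^ p ^ s))ᶜ
      smul_mem' := by
        rintro ⟨_, j, rfl⟩ x hx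
        rw [← smul_zpow_movedBy_eq_of_commute ((Commute.refl g).pow_left _) j]
        exact Set.smul_mem_smul_set hx }
  have hperiod (x : moved) : minimalPeriod (g • ·) (x : α) = p ^ (s + 1) := by
    refine Nat.eq_prime_pow_of_dvd_least_prime_pow Fact.out ?_ ?_
    · rw [← pow_smul_eq_iff_minimalPeriod_dvd]; exact x.2
    · rw [← pow_smul_eq_iff_minimalPeriod_dvd, hg, one_smul]
  have hfree (x : moved) : stabilizer (zpowers g) x = ⊥ := by
    refine (Subgroup.eq_bot_iff_forall _).mpr ?_
    rintro ⟨_, j, rfl⟩ hj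
    have hfix : (g ^ j) • (x : α) = x := congrArg Subtype.val hj
    rw [zpow_smul_eq_iff_minimalPeriod_dvd, hperiod, ← horder] at hfix
    exact Subtype.ext (orderOf_dvd_iff_zpow_eq_one.mp hfix)
  rw [← horder, ← Nat.card_zpowers]
  exact card_dvd_card_of_stabilizer_eq_bot (X := moved) hfree

namespace Function

variable {α : Type*}

noncomputable def ptsOfPeriodPerm (f : α → α) {n : ℕ} (hn : 0 < n) :
    Equiv.Perm (ptsOfPeriod f n) :=
  (bijOn_ptsOfPeriod f hn).equiv f

theorem coe_ptsOfPeriodPerm_pow_apply (f : α → α) {n : ℕ} (hn : 0 < n) (k : ℕ)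
    (x : ptsOfPeriod f n) : ((ptsOfPeriodPerm f hn ^ k) x : α) = f^[k] x := by
  rw [Equiv.Perm.coe_pow]
  exact (bijOn_ptsOfPeriod f hn).mapsTo.coe_iterate_restrict x k

theorem ptsOfPeriodPerm_pow_eq_one (f : α → α) {n : ℕ} (hn : 0 < n) :
    ptsOfPeriodPerm f hn ^ n = 1 :=
  Equiv.ext fun x => Subtype.ext ((coe_ptsOfPeriodPerm_pow_apply f hn n x).trans x.2)

theorem prime_pow_dvd_card_ptsOfPeriod_sub (f : α → α) {p s : ℕ} (hp : p.Prime)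
    (hfin : (ptsOfPeriod f (p ^ (s + 1))).Finite) :
    (p : ℤ) ^ (s + 1) ∣
      Nat.card (ptsOfPeriod f (p ^ (s + 1))) - Nat.card (ptsOfPeriod f (p ^ s)) := by
  have := Fact.mk hp
  set A := ptsOfPeriod f (p ^ (s + 1))
  set σ := ptsOfPeriodPerm f (pow_pos hp.pos (s + 1))
  have hfixed : Nat.card (ptsOfPeriod f (p ^ s)) = Nat.card (fixedBy A (σ ^ p ^ s)) := by
    refine Nat.card_congr <| (Equiv.subtypeSubtypeEquivSubtype fun hx =>
      hx.trans_dvd (pow_dvd_pow p s.le_succ)).symm.trans (Equiv.subtypeEquivRight fun x => ?_)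
    rw [mem_fixedBy, Equiv.Perm.smul_def, Subtype.ext_iff, coe_ptsOfPeriodPerm_pow_apply]
    rfl
  have hsplit : Nat.card (fixedBy A (σ ^ p ^ s)) + Nat.card ↥(fixedBy A (σ ^ p ^ s))ᶜ =
      Nat.card A := by
    have : Finite A := hfin.to_subtype
    rw [Nat.card_coe_set_eq, Nat.card_coe_set_eq, Set.ncard_add_ncard_compl]
  rw [hfixed, ← hsplit, Nat.cast_add, add_sub_cancel_left]
  exact_mod_cast prime_pow_dvd_card_movedBy (ptsOfPeriodPerm_pow_eq_one f _)

end Function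

/-- If every iterate of `f : X → X` has finitely many fixed points, then the sequence
`(|Fix(fⁿ)|)_{n≥1}` satisfies Gauss congruences for every prime: for every prime `p`,
every `m ≥ 1` and every `s ≥ 0`, `|Fix(f^{m p^{s+1}})| ≡ |Fix(f^{m p^s})| (mod p^{s+1})`. -/
theorem fixed_points_gauss_congruences
    (X : Type*) (f : X → X)
    (hfin : ∀ n : ℕ, 0 < n → {x : X | f^[n] x = x}.Finite)
    (p : ℕ) (hp : p.Prime) (m : ℕ) (hm : 1 ≤ m) (s : ℕ) :
    ((p : ℤ) ^ (s + 1)) ∣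
      ((Nat.card {x : X // f^[m * p ^ (s + 1)] x = x} : ℤ) -
       (Nat.card {x : X // f^[m * p ^ s] x = x} : ℤ)) := by
  have hcard (k : ℕ) :
      Nat.card {x : X // f^[m * p ^ k] x = x} = Nat.card (ptsOfPeriod f^[m] (p ^ k)) := by
    rw [iterate_mul]; rfl
  rw [hcard, hcard]
  refine prime_pow_dvd_card_ptsOfPeriod_sub _ hp ?_
  have hfinite := hfin _ (Nat.mul_pos hm (pow_pos hp.pos (s + 1)))
  rwa [iterate_mul] at hfinite
end

section
/- Let X be a set and f : X → X a map such that, for every positive integer n, the set Fix(f^n) of fixed points of the n-th iterate of f is finite. Let Z_f ∈ ℚ[[x]] be the Artin–Mazur zeta function of f, namely the unique power series Z_f ∈ 1 + x·ℚ[[x]] satisfying x·Z_f'(x) = (Σ_{n≥1} |Fix(f^n)| x^n)·Z_f(x) (so that Z_f = exp(Σ_{n≥1} |Fix(f^n)| x^n / n)). Then every coefficient of Z_f is an integer, i.e., Z_f ∈ ℤ[[x]]. -/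
/-!
Group the points of finite period into periodic orbits. An orbit of length `d` lies in
`Fix(fⁿ)` exactly when `d ∣ n`, so its contribution to `∑ |Fix(fⁿ)| xⁿ` is
`∑_{d ∣ n, n > 0} d xⁿ = x g'/g` for `g = 1/(1 - x^d)`, a series with integer coefficients.
Up to degree `k` only the finitely many orbits inside `Fix(f^{k!})` contribute, so the product
`P` of the corresponding series `g` satisfies `x P' = A P` with an `A` that agrees with
`∑ |Fix(fⁿ)| xⁿ` up to degree `k`. Since `A(0) = 0`, the equation determines each coefficient of
a solution from the lower ones (`n zₙ = ∑_{i ≥ 1} aᵢ z_{n-i}`), hence `Z_f ≡ P` modulo `x^{k+1}`.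
-/

theorem Cycle.mem_toFinset {α : Type*} [DecidableEq α] {s : Cycle α} {a : α} :
    a ∈ s.toFinset ↔ a ∈ s :=
  Quotient.inductionOn' s fun _ => by simp

namespace Function

open Finset

variable {S : Type*} {f : S → S}

theorem card_toFinset_periodicOrbit [DecidableEq S] (x : S) :
    #(periodicOrbit f x).toFinset = minimalPeriod f x := by
  have hnodup := nodup_periodicOrbit (f := f) (x := x)
  rw [periodicOrbit_def, Cycle.nodup_coe_iff] at hnodup
  rw [periodicOrbit_def, Cycle.coe_toFinset, List.toFinset_card_of_nodup hnodup, List.length_map,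
    List.length_range]

theorem length_periodicOrbit_pos {N : ℕ} (hN : 0 < N) {x : S} (hx : IsPeriodicPt f N x) :
    0 < (periodicOrbit f x).length := by
  rw [periodicOrbit_length]
  exact hx.minimalPeriod_pos hN

theorem periodicOrbit_eq_periodicOrbit_iff {x y : S} (hx : x ∈ periodicPts f)
    (hy : y ∈ periodicPts f) : periodicOrbit f y = periodicOrbit f x ↔ y ∈ periodicOrbit f x := by
  refine ⟨fun h => h ▸ self_mem_periodicOrbit hy, fun h => ?_⟩
  obtain ⟨n, rfl⟩ := (mem_periodicOrbit_iff hx).1 h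
  exact periodicOrbit_apply_iterate_eq hx n

theorem filter_periodicOrbit_eq [DecidableEq S] {N : ℕ} (hN : 0 < N) {T : Finset S}
    (hT : ∀ y, y ∈ T ↔ IsPeriodicPt f N y) {x : S} (hx : x ∈ T) :
    T.filter (periodicOrbit f · = periodicOrbit f x) = (periodicOrbit f x).toFinset := by
  have hper : ∀ y ∈ T, y ∈ periodicPts f := fun y hy => ⟨N, hN, (hT y).1 hy⟩
  ext y
  rw [mem_filter, Cycle.mem_toFinset]
  refine ⟨fun ⟨hy, h⟩ => (periodicOrbit_eq_periodicOrbit_iff (hper x hx) (hper y hy)).1 h,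
    fun h => ?_⟩
  obtain ⟨n, rfl⟩ := (mem_periodicOrbit_iff (hper x hx)).1 h
  exact ⟨(hT _).2 (((hT x).1 hx).apply_iterate n), periodicOrbit_apply_iterate_eq (hper x hx) n⟩

theorem card_fixedPoints_iterate_eq_sum_periodicOrbit [DecidableEq S] {N n : ℕ} (hN : 0 < N)
    (hn : n ∣ N) {T : Finset S} (hT : ∀ y, y ∈ T ↔ IsPeriodicPt f N y) :
    Nat.card {x // f^[n] x = x} =
      ∑ o ∈ T.image (periodicOrbit f), if o.length ∣ n then o.length else 0 := by
  have hfix : ∀ x, f^[n] x = x ↔ x ∈ T.filter (minimalPeriod f · ∣ n) := fun x => by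
    rw [mem_filter, hT, ← isPeriodicPt_iff_minimalPeriod_dvd]
    exact ⟨fun (h : IsPeriodicPt f n x) => ⟨h.trans_dvd hn, h⟩, And.right⟩
  calc Nat.card {x // f^[n] x = x}
      = #(T.filter (minimalPeriod f · ∣ n)) := by
        rw [← Nat.card_eq_finsetCard]; exact Nat.card_congr (Equiv.subtypeEquivRight hfix)
    _ = ∑ x ∈ T, if minimalPeriod f x ∣ n then 1 else 0 := card_filter _ _
    _ = ∑ o ∈ T.image (periodicOrbit f),
          ∑ x ∈ T with periodicOrbit f x = o, if minimalPeriod f x ∣ n then 1 else 0 :=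
        (sum_fiberwise_of_maps_to (fun x hx => mem_image_of_mem _ hx) _).symm
    _ = _ := sum_congr rfl fun o ho => ?_
  obtain ⟨x, hx, rfl⟩ := mem_image.1 ho
  rw [sum_congr rfl fun y hy => by rw [← periodicOrbit_length, (mem_filter.1 hy).2], sum_const,
    filter_periodicOrbit_eq hN hT hx, card_toFinset_periodicOrbit]
  simp

end Function

namespace PowerSeries

open Finset

section CommSemiring

variable {R : Type*} [CommSemiring R]

theorem coeff_X_mul_derivative (F : R⟦X⟧) (n : ℕ) :
    coeff n (X * d⁄dX R F) = n * coeff n F := by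
  cases n with
  | zero => simp
  | succ m => rw [coeff_succ_X_mul, coeff_derivative, mul_comm]; push_cast; rfl

theorem X_mul_derivative_prod {ι : Type*} (s : Finset ι) {F A : ι → R⟦X⟧}
    (h : ∀ i ∈ s, X * d⁄dX R (F i) = A i * F i) :
    X * d⁄dX R (∏ i ∈ s, F i) = (∑ i ∈ s, A i) * ∏ i ∈ s, F i := by
  classical
  induction s using Finset.cons_induction with
  | empty => simp
  | cons a s ha ih =>
    have hs := ih fun i hi => h i (mem_cons_of_mem hi)
    rw [prod_cons, sum_cons]
    calc X * d⁄dX R (F a * ∏ i ∈ s, F i)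
        = F a * (X * d⁄dX R (∏ i ∈ s, F i)) + (∏ i ∈ s, F i) * (X * d⁄dX R (F a)) := by
          rw [Derivation.leibniz, smul_eq_mul, smul_eq_mul]; ring
      _ = _ := by rw [hs, h a (mem_cons_self a s)]; ring

end CommSemiring

section CommRing

variable {R : Type*} [CommRing R]

theorem coeff_eq_of_X_mul_derivative_eq [IsAddTorsionFree R] {F G A B : R⟦X⟧}
    (hF : X * d⁄dX R F = A * F) (hG : X * d⁄dX R G = B * G)
    (hFG : constantCoeff F = constantCoeff G) (hA : constantCoeff A = 0) {k : ℕ}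
    (hAB : ∀ n ≤ k, coeff n A = coeff n B) : ∀ n ≤ k, coeff n F = coeff n G := by
  intro n
  induction n using Nat.strong_induction_on with
  | _ n ih =>
  intro hn
  rcases n.eq_zero_or_pos with rfl | hpos
  · simpa using hFG
  apply nsmul_right_injective hpos.ne'
  simp only [nsmul_eq_mul, ← coeff_X_mul_derivative, hF, hG, coeff_mul]
  refine sum_congr rfl fun ⟨i, j⟩ hij => ?_
  rw [HasAntidiagonal.mem_antidiagonal] at hij
  rcases i.eq_zero_or_pos with rfl | hi
  · rw [← hAB 0 k.zero_le, coeff_zero_eq_constantCoeff, hA, zero_mul, zero_mul]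
  · rw [hAB i (by omega), ih j (by omega) (by omega)]

variable (R) in
noncomputable def invOneSubXPow (d : ℕ) : R⟦X⟧ :=
  mk fun n => if d ∣ n then 1 else 0

theorem coeff_invOneSubXPow (d n : ℕ) :
    coeff n (invOneSubXPow R d) = if d ∣ n then 1 else 0 :=
  coeff_mk _ _

@[simp]
theorem constantCoeff_invOneSubXPow (d : ℕ) : constantCoeff (invOneSubXPow R d) = 1 := by
  simp [← coeff_zero_eq_constantCoeff, coeff_invOneSubXPow]

theorem invOneSubXPow_mul_one_sub_X_pow {d : ℕ} (hd : 0 < d) :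
    invOneSubXPow R d * (1 - X ^ d) = 1 := by
  ext n
  rw [mul_sub, mul_one, map_sub, coeff_mul_X_pow', coeff_invOneSubXPow, coeff_one]
  by_cases hdn : d ≤ n
  · simp [hdn, coeff_invOneSubXPow, Nat.dvd_sub_iff_left hdn dvd_rfl, show n ≠ 0 by omega]
  · rw [if_neg hdn]
    rcases n.eq_zero_or_pos with rfl | hn
    · simp
    · have : ¬d ∣ n := fun h => hdn (Nat.le_of_dvd hn h)
      simp [hn.ne', this]

theorem X_mul_derivative_invOneSubXPow {d : ℕ} (hd : 0 < d) :
    X * d⁄dX R (invOneSubXPow R d) =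
      C (d : R) * (invOneSubXPow R d - 1) * invOneSubXPow R d := by
  have hunit := invOneSubXPow_mul_one_sub_X_pow (R := R) hd
  have hD := (d⁄dX R).leibniz_of_mul_eq_one hunit
  obtain ⟨e, rfl⟩ := Nat.exists_eq_add_one_of_ne_zero hd.ne'
  simp only [map_sub, Derivation.map_one_eq_zero, derivative_pow, derivative_X, smul_eq_mul,
    Nat.add_sub_cancel] at hD
  rw [hD, map_natCast]
  -- `hunit` says `X ^ d * g = g - 1`, turning `d X ^ d g ^ 2` into `d (g - 1) g`
  linear_combination (-((e + 1 : ℕ) : R⟦X⟧) * invOneSubXPow R (e + 1)) * hunit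

theorem coeff_C_mul_invOneSubXPow_sub_one (d : ℕ) {n : ℕ} (hn : n ≠ 0) :
    coeff n (C (d : R) * (invOneSubXPow R d - 1)) = if d ∣ n then (d : R) else 0 := by
  rw [coeff_C_mul, map_sub, coeff_invOneSubXPow, coeff_one, if_neg hn, sub_zero, mul_ite,
    mul_one, mul_zero]

theorem map_invOneSubXPow {S : Type*} [CommRing S] (φ : R →+* S) (d : ℕ) :
    map φ (invOneSubXPow R d) = invOneSubXPow S d := by
  ext n
  simp [coeff_invOneSubXPow, apply_ite φ]

end CommRing

end PowerSeries

open PowerSeries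

/-- If every iterate of `f : S → S` has finitely many fixed points, then the Artin–Mazur
zeta function `Z_f ∈ 1 + x·ℚ[[x]]`, characterized by `x·Z_f' = (Σ_{n≥1} |Fix(fⁿ)| xⁿ)·Z_f`,
has integer coefficients. -/
theorem artin_mazur_zeta_integral
    (S : Type*) (f : S → S)
    (hfin : ∀ n : ℕ, 0 < n → {x : S | f^[n] x = x}.Finite)
    (Z : PowerSeries ℚ) (hZ0 : constantCoeff Z = 1)
    (hZde : X * Z.derivativeFun =
      (mk fun n : ℕ => if n = 0 then 0
        else (Nat.card {x : S // f^[n] x = x} : ℚ)) * Z) :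
    ∀ k : ℕ, ∃ z : ℤ, coeff k Z = (z : ℚ) := by
  classical
  intro k
  set A : ℚ⟦X⟧ := mk fun n : ℕ => if n = 0 then 0
    else (Nat.card {x : S // f^[n] x = x} : ℚ)
  have hA0 : constantCoeff A = 0 := by simp [A]
  set T := (hfin k.factorial k.factorial_pos).toFinset
  have hT : ∀ y, y ∈ T ↔ Function.IsPeriodicPt f k.factorial y := fun _ =>
    Set.Finite.mem_toFinset _
  set O := T.image (Function.periodicOrbit f)
  have hlen : ∀ o ∈ O, 0 < o.length := Finset.forall_mem_image.2 fun x hx =>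
    Function.length_periodicOrbit_pos k.factorial_pos ((hT x).1 hx)
  set P : ℤ⟦X⟧ := ∏ o ∈ O, invOneSubXPow ℤ o.length
  have hmapP : map (Int.castRingHom ℚ) P = ∏ o ∈ O, invOneSubXPow ℚ o.length := by
    simp only [P, map_prod, map_invOneSubXPow]
  have hP : X * d⁄dX ℚ (∏ o ∈ O, invOneSubXPow ℚ o.length) =
      (∑ o ∈ O, C (o.length : ℚ) * (invOneSubXPow ℚ o.length - 1)) *
        ∏ o ∈ O, invOneSubXPow ℚ o.length :=
    X_mul_derivative_prod O fun o ho => X_mul_derivative_invOneSubXPow (hlen o ho)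
  have hcoeff : ∀ n ≤ k, coeff n A =
      coeff n (∑ o ∈ O, C (o.length : ℚ) * (invOneSubXPow ℚ o.length - 1)) := by
    intro n hn
    rcases n.eq_zero_or_pos with rfl | hpos
    · simp [hA0]
    · rw [coeff_mk, if_neg hpos.ne', Function.card_fixedPoints_iterate_eq_sum_periodicOrbit
        k.factorial_pos (Nat.dvd_factorial hpos hn) hT]
      simp only [map_sum, coeff_C_mul_invOneSubXPow_sub_one _ hpos.ne']
      push_cast
      rfl
  have hZP := coeff_eq_of_X_mul_derivative_eq hZde hP (by simp [hZ0]) hA0 hcoeff k le_rfl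
  exact ⟨coeff k P, by rw [hZP, ← hmapP, coeff_map]; rfl⟩
end

section
/- Let p be a prime number, R a commutative ring of characteristic p, and η ∈ R[[x]] a formal power series. Define Δ : R[[x]] → R[[x]] by Δ(f) = ∂f − η·f, where ∂ is the formal derivative. Then the p-th iterate Δ^p of Δ is R[[x]]-linear: for all f, g ∈ R[[x]], Δ^p(f·g) = f·Δ^p(g). -/
/-!
View `Δ = ∂ - η` as an element `D` of the ring `End_R(R⟦X⟧)`. Its commutator with multiplication
by `u` is multiplication by `∂u`, so `(ad D)^p` sends multiplication by `f` to multiplication by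
`∂^p f`, which vanishes since `∂^p` multiplies the `n`-th coefficient by
`(n + 1) ⋯ (n + p) ≡ 0 mod p`. On the other hand `ad D = L_D - R_D` with `L_D`, `R_D` commuting,
so in characteristic `p` we get `(ad D)^p = L_D^p - R_D^p = ad (D^p)`. Hence `D^p` commutes with
every multiplication operator.
-/

open PowerSeries

theorem iterate_lie_eq_lie_pow {A : Type*} [Ring A] (p : ℕ) [ExpChar A p] (a b : A) :
    (fun c ↦ ⁅a, c⁆)^[p] b = ⁅a ^ p, b⁆ := by
  have : ExpChar (Module.End ℤ A) p :=
    expChar_of_injective_ringHom (f := (Algebra.lmul ℤ A).toRingHom) Algebra.lmul_injective p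
  have hpow := sub_pow_expChar_of_commute p (LinearMap.commute_mulLeft_right (R := ℤ) a a)
  rw [LinearMap.pow_mulLeft, LinearMap.pow_mulRight] at hpow
  have hb := LinearMap.congr_fun hpow b
  rw [Module.End.coe_pow] at hb
  exact hb

namespace Derivation

variable {R S : Type*} [CommRing R] [CommRing S] [Algebra R S]

def connection (d : Derivation R S S) (η : S) : Module.End R S :=
  (d : Module.End R S) - LinearMap.mulLeft R η

@[simp]
theorem connection_apply (d : Derivation R S S) (η u : S) :
    d.connection η u = d u - η * u :=
  rfl

theorem lie_connection_mulLeft (d : Derivation R S S) (η u : S) :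
    ⁅d.connection η, LinearMap.mulLeft R u⁆ = LinearMap.mulLeft R (d u) := by
  ext v
  simp only [Ring.lie_def, LinearMap.sub_apply, Module.End.mul_apply, LinearMap.mulLeft_apply,
    connection_apply, leibniz, smul_eq_mul]
  ring

theorem iterate_lie_connection_mulLeft (d : Derivation R S S) (η u : S) (n : ℕ) :
    (fun c ↦ ⁅d.connection η, c⁆)^[n] (LinearMap.mulLeft R u) =
      LinearMap.mulLeft R (d^[n] u) := by
  induction n with
  | zero => rfl
  | succ n ih =>
    rw [Function.iterate_succ_apply', ih, lie_connection_mulLeft, Function.iterate_succ_apply']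

theorem connection_pow_mul_of_iterate_eq_zero (p : ℕ) [ExpChar S p] (d : Derivation R S S)
    (η : S) {u : S} (hu : d^[p] u = 0) (v : S) :
    (d.connection η ^ p) (u * v) = u * (d.connection η ^ p) v := by
  have : ExpChar (Module.End R S) p :=
    expChar_of_injective_ringHom (f := (Algebra.lmul R S).toRingHom) Algebra.lmul_injective p
  have hcomm : ⁅d.connection η ^ p, LinearMap.mulLeft R u⁆ = 0 := by
    rw [← iterate_lie_eq_lie_pow, iterate_lie_connection_mulLeft, hu,
      LinearMap.mulLeft_zero_eq_zero]
  simpa [Ring.lie_def, sub_eq_zero] using LinearMap.congr_fun hcomm v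

end Derivation

theorem PowerSeries.iterate_derivative_eq_zero_of_charP {R : Type*} [CommSemiring R] (p : ℕ)
    [CharP R p] (hp : p ≠ 0) (f : R⟦X⟧) : (d⁄dX R)^[p] f = 0 := by
  ext k
  rw [coeff_iterate_derivative, (CharP.cast_eq_zero_iff R p _).mpr, zero_mul, map_zero]
  exact (Nat.dvd_factorial (Nat.pos_of_ne_zero hp) le_rfl).trans
    (Nat.factorial_dvd_ascFactorial _ _)

/-- If `R` is a commutative ring of prime characteristic `p`, `η ∈ R[[x]]`, and
`Δ(f) = ∂f − η·f`, then the `p`-curvature `Δ^p` is `R[[x]]`-linear: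
`Δ^p(f·g) = f·Δ^p(g)`. -/
theorem p_curvature_linear
    (p : ℕ) (hp : p.Prime) (R : Type*) [CommRing R] [CharP R p]
    (η : PowerSeries R) (Δ : PowerSeries R → PowerSeries R)
    (hΔ : ∀ f : PowerSeries R, Δ f = f.derivativeFun - η * f)
    (f g : PowerSeries R) :
    Δ^[p] (f * g) = f * Δ^[p] g := by
  have : Fact p.Prime := ⟨hp⟩
  have : CharP R⟦X⟧ p := charP_of_injective_ringHom C_injective p
  have hΔD : Δ = (d⁄dX R).connection η := funext hΔ
  rw [hΔD, ← Module.End.coe_pow]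
  exact (d⁄dX R).connection_pow_mul_of_iterate_eq_zero p η
    (iterate_derivative_eq_zero_of_charP p hp.ne_zero f) g
end

section
/- Let p be a prime number, k a field of characteristic p, and η ∈ k[[x]] a formal power series. Define Δ : k[[x]] → k[[x]] by Δ(f) = ∂f − η·f, where ∂ is the formal derivative. Then Δ^p is identically zero on k[[x]] if and only if there exists a non-zero power series f ∈ k[[x]] with ∂f = η·f. -/
/-!
If `g` is a unit solving `∂g = η·g`, then `Δ(g·h) = g·∂h`, so `Δ` is conjugate to `∂` and
`Δ^p = g ∘ ∂^p ∘ g⁻¹ = 0`, because `∂^p` multiplies the coefficient of `x^(n+p)` by a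
multiple of `p!`. A non-zero solution `f = x^m·g` yields such a unit `g`: comparing the
coefficients of `x^(m-1)` in `∂f = η·f` gives `m = 0` in `k`, hence `∂(x^m) = 0` and `∂g = η·g`.
Conversely, if `Δ^p = 0` then `Δ` kills the last non-zero term of `1, Δ 1, …, Δ^p 1`.
-/

open PowerSeries

theorem Function.exists_ne_zero_apply_eq_zero_of_iterate_eq_zero {M : Type*} [Zero M]
    {Δ : M → M} {x : M} {n : ℕ} (hn : Δ^[n] x = 0) (hx : x ≠ 0) : ∃ y ≠ 0, Δ y = 0 := by
  induction n generalizing x with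
  | zero => exact absurd hn hx
  | succ n ih =>
    by_cases hΔx : Δ x = 0
    · exact ⟨x, hx, hΔx⟩
    · exact ih hn hΔx

theorem Derivation.iterate_sub_mul_apply_mul {R A : Type*} [CommSemiring R] [CommRing A]
    [Algebra R A] {D : Derivation R A A} {η g : A} (hg : D g = η * g) (n : ℕ) (h : A) :
    (fun f ↦ D f - η * f)^[n] (g * h) = g * (⇑D)^[n] h := by
  have hstep (h : A) : D (g * h) - η * (g * h) = g * D h := by
    rw [D.leibniz, hg, smul_eq_mul, smul_eq_mul]
    ring
  induction n generalizing h with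
  | zero => rfl
  | succ n ih => rw [Function.iterate_succ_apply, hstep, ih, ← Function.iterate_succ_apply]

namespace PowerSeries

variable {R : Type*}

theorem iterate_derivative_eq_zero_of_charP_s9 [CommSemiring R] (p : ℕ) [CharP R p] (hp : p ≠ 0)
    (f : R⟦X⟧) : (d⁄dX R)^[p] f = 0 := by
  ext n
  rw [coeff_iterate_derivative, map_zero, (CharP.cast_eq_zero_iff R p _).2, zero_mul]
  exact (Nat.dvd_factorial (Nat.pos_of_ne_zero hp) le_rfl).trans (Nat.factorial_dvd_ascFactorial _ _)

theorem derivative_X_pow_eq_zero [CommSemiring R] {m : ℕ} (hm : (m : R) = 0) :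
    d⁄dX R (X ^ m : R⟦X⟧) = 0 := by
  rw [derivative_pow, ← map_natCast (C (R := R)), hm, map_zero, zero_mul, zero_mul]

theorem natCast_order_toNat_eq_zero_of_derivative_eq_mul [CommRing R] [NoZeroDivisors R]
    {η f : R⟦X⟧} (hf : d⁄dX R f = η * f) : (f.order.toNat : R) = 0 := by
  rcases eq_or_ne f 0 with rfl | hf0
  · simp
  rcases hm : f.order.toNat with _ | s
  · exact Nat.cast_zero
  have hcoeff : coeff (s + 1) f * (s + 1) = 0 := by
    rw [← coeff_derivative, hf, coeff_mul_of_lt_order]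
    rw [← coe_toNat_order hf0, hm]
    exact_mod_cast s.lt_succ_self
  have hlead : coeff (s + 1) f ≠ 0 := hm ▸ coeff_order hf0
  exact_mod_cast (mul_eq_zero.1 hcoeff).resolve_left hlead

theorem derivative_divXPowOrder_eq_mul [CommRing R] [IsDomain R] {η f : R⟦X⟧}
    (hf : d⁄dX R f = η * f) : d⁄dX R (divXPowOrder f) = η * divXPowOrder f := by
  have hXm := derivative_X_pow_eq_zero (natCast_order_toNat_eq_zero_of_derivative_eq_mul hf)
  rw [← X_pow_order_mul_divXPowOrder (f := f), Derivation.leibniz, hXm, smul_zero, add_zero,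
    smul_eq_mul, mul_left_comm] at hf
  exact mul_left_cancel₀ (pow_ne_zero _ X_ne_zero) hf

end PowerSeries

set_option linter.deprecated false in
/-- If `k` is a field of prime characteristic `p`, `η ∈ k[[x]]`, and `Δ(f) = ∂f − η·f`,
then the `p`-curvature `Δ^p` vanishes identically if and only if the equation `∂f = η·f`
has a non-zero power series solution. -/
theorem p_curvature_zero_iff_solution
    (p : ℕ) (hp : p.Prime) (k : Type*) [Field k] [CharP k p]
    (η : PowerSeries k) (Δ : PowerSeries k → PowerSeries k)
    (hΔ : ∀ f : PowerSeries k, Δ f = f.derivativeFun - η * f) :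
    (∀ f : PowerSeries k, Δ^[p] f = 0) ↔
      ∃ f : PowerSeries k, f ≠ 0 ∧ f.derivativeFun = η * f := by
  obtain rfl : Δ = fun f ↦ d⁄dX k f - η * f := funext hΔ
  change _ ↔ ∃ f, f ≠ 0 ∧ d⁄dX k f = η * f
  constructor
  · intro hΔp
    obtain ⟨f, hf, hΔf⟩ :=
      Function.exists_ne_zero_apply_eq_zero_of_iterate_eq_zero (hΔp 1) one_ne_zero
    exact ⟨f, hf, sub_eq_zero.1 hΔf⟩
  · rintro ⟨f, hf, hsol⟩ t
    obtain ⟨g, hg⟩ := isUnit_divided_by_X_pow_order hf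
    have hgsol := derivative_divXPowOrder_eq_mul hsol
    rw [← hg] at hgsol
    calc (fun f ↦ d⁄dX k f - η * f)^[p] t
        = (fun f ↦ d⁄dX k f - η * f)^[p] (g * (↑g⁻¹ * t)) := by
          rw [Units.mul_inv_cancel_left]
      _ = g * (d⁄dX k)^[p] (↑g⁻¹ * t) := Derivation.iterate_sub_mul_apply_mul hgsol p _
      _ = 0 := by rw [iterate_derivative_eq_zero_of_charP_s9 p hp.ne_zero, mul_zero]
end

section
/- (Jacobson's formula in rank one.) Let p be a prime number, k a field of characteristic p, and η ∈ k[[x]] a formal power series. Define Δ : k[[x]] → k[[x]] by Δ(f) = ∂f − η·f, where ∂ is the formal derivative. Then Δ^p(1) = −∂^{p−1}(η) + (−η)^p, where ∂^{p−1} denotes the (p−1)-st iterated formal derivative. -/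
/-!
Let `c` be a constant and `P_n(c) = (∂ - c η)ⁿ 1`, a polynomial in `c` of degree `n` with leading
coefficient `(-η)ⁿ` and `P_n(0) = 0` for `n > 0`. Differentiating in `c` and using Leibniz' rule
gives `dP_n/dc = -∑ᵢ C(n, i+1) ∂ⁱη · P_{n-1-i}`. For `n = p` every binomial coefficient but the
last vanishes, so `dP_p/dc = -∂^{p-1}η` is constant; as the integers `2, …, p-1` are invertible,
`P_p(c) = -c ∂^{p-1}η + cᵖ(-η)ᵖ`. Now put `c = 1`.
-/

open scoped Differential

namespace Differential

open Polynomial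

variable {A : Type*} [CommRing A] [Differential A]

theorem derivative_mapCoeffs (f : A[X]) : derivative (mapCoeffs f) = mapCoeffs (derivative f) := by
  ext n
  simp [coeff_derivative, mul_comm]

theorem eval_mapCoeffs {c : A} (hc : c′ = 0) (f : A[X]) : (mapCoeffs f).eval c = (f.eval c)′ := by
  simpa [hc] using (deriv_aeval_eq c f).symm

/-- The operator `∂ - X η` on `A[X]`, where `∂` acts on coefficients: the variable `X` stands for a
constant scalar `c`, so that `(scaledTwist η)^[n] 1` is `(∂ - c η)ⁿ 1` as a polynomial in `c`. -/
noncomputable def scaledTwist (η : A) : A[X] →+ A[X] :=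
  mapCoeffs.toAddMonoidHom - AddMonoidHom.mulLeft (C η * X)

variable (η : A)

@[simp]
theorem scaledTwist_apply (f : A[X]) : scaledTwist η f = mapCoeffs f - C η * X * f := rfl

theorem scaledTwist_C_mul (a : A) (f : A[X]) :
    scaledTwist η (C a * f) = C a′ * f + C a * scaledTwist η f := by
  simp only [scaledTwist_apply, Derivation.leibniz, mapCoeffs_C, smul_eq_mul]
  ring

theorem derivative_scaledTwist (f : A[X]) :
    derivative (scaledTwist η f) = scaledTwist η (derivative f) - C η * f := by
  simp only [scaledTwist_apply, derivative_sub, derivative_mapCoeffs, derivative_mul,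
    derivative_C, derivative_X]
  ring

theorem coeff_scaledTwist_zero (f : A[X]) : (scaledTwist η f).coeff 0 = (f.coeff 0)′ := by
  simp [mul_assoc]

theorem coeff_scaledTwist_succ (f : A[X]) (i : ℕ) :
    (scaledTwist η f).coeff (i + 1) = (f.coeff (i + 1))′ - η * f.coeff i := by
  simp [mul_assoc]

theorem eval_one_scaledTwist_iterate (n : ℕ) :
    ((scaledTwist η)^[n] 1).eval 1 = (fun f => f′ - η * f)^[n] 1 := by
  induction n with
  | zero => simp
  | succ n ih =>
    simp [Function.iterate_succ_apply', eval_mapCoeffs, ih]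

theorem coeff_scaledTwist_iterate_of_lt {n i : ℕ} (h : n < i) :
    ((scaledTwist η)^[n] 1).coeff i = 0 := by
  induction n generalizing i with
  | zero => simp [coeff_one, h.ne']
  | succ n ih =>
    obtain ⟨i, rfl⟩ := Nat.exists_eq_add_one_of_ne_zero (by omega : i ≠ 0)
    rw [Function.iterate_succ_apply', coeff_scaledTwist_succ, ih (by omega), ih (by omega)]
    simp

theorem coeff_scaledTwist_iterate_self (n : ℕ) :
    ((scaledTwist η)^[n] 1).coeff n = (-η) ^ n := by
  induction n with
  | zero => simp
  | succ n ih =>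
    rw [Function.iterate_succ_apply', coeff_scaledTwist_succ, ih,
      coeff_scaledTwist_iterate_of_lt η n.lt_succ_self]
    simp [pow_succ']

theorem coeff_zero_scaledTwist_iterate_succ (n : ℕ) :
    ((scaledTwist η)^[n + 1] 1).coeff 0 = 0 := by
  induction n with
  | zero => simp
  | succ n ih => rw [Function.iterate_succ_apply', coeff_scaledTwist_zero, ih, map_zero]

theorem derivative_scaledTwist_iterate (n : ℕ) :
    derivative ((scaledTwist η)^[n] 1) = -∑ i ∈ Finset.range n,
      n.choose (i + 1) • (C ((⇑deriv)^[i] η) * (scaledTwist η)^[n - (i + 1)] 1) := by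
  induction n with
  | zero => simp
  | succ n ih =>
    set F : ℕ → A[X] := fun i => C ((⇑deriv)^[i] η) * (scaledTwist η)^[n - i] 1
    have hF : ∀ i ∈ Finset.range n,
        scaledTwist η (C ((⇑deriv)^[i] η) * (scaledTwist η)^[n - (i + 1)] 1) = F (i + 1) + F i := by
      intro i hi
      have hi : n - (i + 1) + 1 = n - i := by have := Finset.mem_range.mp hi; omega
      rw [scaledTwist_C_mul, ← Function.iterate_succ_apply' deriv,
        ← Function.iterate_succ_apply' (scaledTwist η), Nat.succ_eq_add_one (n - (i + 1)), hi]
    rw [Function.iterate_succ_apply']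
    simp only [Nat.add_sub_add_right]
    calc derivative (scaledTwist η ((scaledTwist η)^[n] 1))
        = -(∑ i ∈ Finset.range n, n.choose (i + 1) • F (i + 1) +
            ∑ i ∈ Finset.range n, n.choose (i + 1) • F i) - C η * (scaledTwist η)^[n] 1 := by
          rw [derivative_scaledTwist, ih, map_neg, map_sum, ← Finset.sum_add_distrib]
          simp only [map_nsmul]
          rw [Finset.sum_congr rfl fun i hi => by rw [hF i hi, smul_add]]
      _ = -∑ i ∈ Finset.range (n + 1), (n + 1).choose (i + 1) • F i := by
          simp only [Nat.choose_succ_succ', add_smul, Finset.sum_add_distrib]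
          rw [Finset.sum_range_succ', Finset.sum_range_succ (fun i => n.choose (i + 1) • F i),
            Nat.choose_succ_self, zero_smul, add_zero]
          simp only [Nat.choose_zero_right, one_smul, F, Function.iterate_zero, id_eq, Nat.sub_zero]
          abel

variable {p : ℕ} [CharP A p]

theorem derivative_scaledTwist_iterate_prime (hp : p.Prime) :
    derivative ((scaledTwist η)^[p] 1) = -C ((⇑deriv)^[p - 1] η) := by
  have hp0 := hp.pos
  rw [derivative_scaledTwist_iterate, Finset.sum_eq_single (p - 1)]
  · simp [Nat.sub_add_cancel hp0]
  · intro i hi hne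
    have hdvd : p ∣ p.choose (i + 1) :=
      hp.dvd_choose_self (by omega) (by have := Finset.mem_range.mp hi; omega)
    rw [nsmul_eq_mul, (CharP.cast_eq_zero_iff A[X] p _).mpr hdvd, zero_mul]
  · simp [hp0]

theorem coeff_succ_scaledTwist_iterate_prime (hp : p.Prime) (i : ℕ) :
    ((scaledTwist η)^[p] 1).coeff (i + 1) * (i + 1) = if i = 0 then -(⇑deriv)^[p - 1] η else 0 := by
  rw [← coeff_derivative, derivative_scaledTwist_iterate_prime η hp, ← C_neg, coeff_C]

theorem scaledTwist_iterate_prime (hp : p.Prime) :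
    (scaledTwist η)^[p] 1 = C (-(⇑deriv)^[p - 1] η) * X + C ((-η) ^ p) * X ^ p := by
  have hp1 := hp.one_lt
  ext i
  rw [coeff_add, coeff_C_mul_X, coeff_C_mul_X_pow]
  rcases Nat.lt_trichotomy i p with hi | rfl | hi
  · obtain _ | _ | i := i
    · obtain ⟨q, rfl⟩ := Nat.exists_eq_add_one_of_ne_zero hp.ne_zero
      rw [coeff_zero_scaledTwist_iterate_succ]
      simp
    · have h := coeff_succ_scaledTwist_iterate_prime η hp 0
      simp only [Nat.cast_zero, zero_add, mul_one, if_true] at h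
      simp [h, hp1.ne]
    · have hunit : IsUnit ((↑(i + 1) : A) + 1) := by
        rw [← Nat.cast_add_one]
        exact (CharP.isUnit_natCast_iff hp).mpr (Nat.not_dvd_of_pos_of_lt (by omega) hi)
      have h := coeff_succ_scaledTwist_iterate_prime η hp (i + 1)
      rw [if_neg i.succ_ne_zero, hunit.mul_left_eq_zero] at h
      simp [h, hi.ne]
  · simp [coeff_scaledTwist_iterate_self, hp1.ne']
  · simp [coeff_scaledTwist_iterate_of_lt η hi, hi.ne', (hp1.trans hi).ne']

theorem iterate_deriv_sub_mul_one_prime (hp : p.Prime) :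
    (fun f => f′ - η * f)^[p] 1 = -(⇑deriv)^[p - 1] η + (-η) ^ p := by
  rw [← eval_one_scaledTwist_iterate, scaledTwist_iterate_prime η hp]
  simp

end Differential

/-- Jacobson's formula in rank one: if `k` is a field of prime characteristic `p`,
`η ∈ k[[x]]`, and `Δ(f) = ∂f − η·f`, then `Δ^p(1) = −∂^{p−1}(η) + (−η)^p`. -/
theorem jacobson_formula_rank_one
    (p : ℕ) (hp : p.Prime) (k : Type*) [Field k] [CharP k p]
    (η : PowerSeries k) (Δ : PowerSeries k → PowerSeries k)
    (hΔ : ∀ f : PowerSeries k, Δ f = f.derivativeFun - η * f) :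
    Δ^[p] 1 = -((fun f : PowerSeries k => f.derivativeFun)^[p - 1] η) + (-η) ^ p := by
  -- `Differential` wants the ℤ-algebra `Ring.toIntAlgebra`, which is not reducibly the instance
  -- found on power series, so the derivation over `ℤ` is built by hand.
  let : Differential (PowerSeries k) :=
    ⟨@Derivation.mk ℤ (PowerSeries k) (PowerSeries k) _ _ _ (Ring.toIntAlgebra _) _ _
      (PowerSeries.derivative k).toAddMonoidHom.toIntLinearMap
      (PowerSeries.derivative k).map_one_eq_zero (PowerSeries.derivative k).leibniz⟩
  have : CharP (PowerSeries k) p := charP_of_injective_ringHom PowerSeries.C_injective p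
  obtain rfl : Δ = fun f => f′ - η * f := funext hΔ
  exact Differential.iterate_deriv_sub_mul_one_prime η hp
end

section
/- (Dieudonné–Dwork lemma over number fields.) Let K be a finite Galois extension of ℚ, p a rational prime unramified in K, 𝔭 a nonzero prime ideal of 𝓞_K lying over p, and τ ∈ Gal(K/ℚ) a Frobenius automorphism at 𝔭 (i.e., τ(x) − x^p ∈ 𝔭 for every x ∈ 𝓞_K). Let F ∈ 1 + x·K[[x]], and let F^τ(x^p) denote the power series obtained from F by applying τ to every coefficient and substituting x^p for x. Then every coefficient of F lies in 𝓞_{K,𝔭} if and only if the quotient F^τ(x^p)/F(x)^p (computed in K[[x]], which is legitimate since F(0) = 1) lies in 1 + p·x·𝓞_{K,𝔭}[[x]], i.e., its constant coefficient is 1 and each of its coefficients of positive index lies in p·𝓞_{K,𝔭}. -/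
/-!
Let `R = 𝓞_{K,𝔭}`. Since `p` is unramified at `𝔭`, every element of `𝔭` lies in `pR`, so the
Frobenius condition gives `τ a ≡ a ^ p (mod pR)` for all `a ∈ R`. Because `a ↦ a ^ p` is a ring
endomorphism of `R ⧸ pR`, this yields `f^τ(x^p) ≡ f(x)^p (mod pR)` coefficientwise for every
`f ∈ R[[x]]`.

Write `F = ∑ aₙ xⁿ`, `G = ∑ gₙ xⁿ` and compare `n`-th coefficients in `F^τ(x^p) = G·F^p`, with
`P` the truncation of `F` below degree `n`: the coefficient `n` of `F^τ(x^p)` is that of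
`P^τ(x^p)`, and that of `F^p` is that of `P^p` plus `p·aₙ`. Hence, if `aⱼ ∈ R` for `j < n` and
`gₖ ∈ pR` for `0 < k < n`, then `gₙ + p·aₙ ∈ pR`, i.e. `aₙ ∈ R ↔ gₙ ∈ pR`. Both implications
follow by strong induction on `n`.
-/

open NumberField PowerSeries

/-- `a ∈ c · 𝓞_{K,𝔭}`: there are `u ∈ 𝓞_K` and `s ∈ 𝓞_K ∖ 𝔭` with `s·a = c·u`. -/
def MemLoc {K : Type*} [Field K] [NumberField K]
    (𝔭 : Ideal (𝓞 K)) (c a : K) : Prop :=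
  ∃ s u : 𝓞 K, s ∉ 𝔭 ∧ (s : K) * a = c * (u : K)

def IsFrobAt {K : Type*} [Field K] [NumberField K]
    (τ : K ≃ₐ[ℚ] K) (𝔭 : Ideal (𝓞 K)) (p : ℕ) : Prop :=
  ∀ x : 𝓞 K, ∃ y : 𝓞 K, (y : K) = τ (x : K) - (x : K) ^ p ∧ y ∈ 𝔭

theorem forall_iff_forall_pos_of_step {A B : ℕ → Prop} (h0 : A 0)
    (step : ∀ n, 1 ≤ n → (∀ j < n, A j) → (∀ k, 1 ≤ k → k < n → B k) → (A n ↔ B n)) :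
    (∀ n, A n) ↔ ∀ n, 1 ≤ n → B n := by
  constructor
  · intro hA n
    induction n using Nat.strong_induction_on with
    | _ n ih => exact fun hn => (step n hn (fun j _ => hA j) fun k hk hkn => ih k hkn hk).1 (hA n)
  · intro hB n
    induction n using Nat.strong_induction_on with
    | _ n ih =>
      rcases Nat.eq_zero_or_pos n with rfl | hn
      · exact h0
      · exact (step n hn ih fun k hk _ => hB k hk).2 (hB n hn)

namespace PowerSeries

variable {R : Type*} [CommRing R]

theorem coeff_pow_sub_pow_of_sub_eq_X_pow_mul {f g φ : R⟦X⟧} {n : ℕ}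
    (hf : constantCoeff f = 1) (hg : constantCoeff g = 1) (h : f - g = X ^ n * φ) (m : ℕ) :
    coeff n (f ^ m - g ^ m) = m * constantCoeff φ := by
  rw [← geom_sum₂_mul, h, mul_left_comm, coeff_X_pow_mul', if_pos le_rfl, Nat.sub_self,
    coeff_zero_eq_constantCoeff, map_mul, map_sum]
  simp [hf, hg]

theorem coeff_trunc_pow_of_lt {f : R⟦X⟧} {j n : ℕ} (h : j < n) (m : ℕ) :
    coeff j ((trunc n f : R⟦X⟧) ^ m) = coeff j (f ^ m) := by
  have := congrArg (Polynomial.coeff · j) (trunc_trunc_pow f n m)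
  simpa only [coeff_trunc, if_pos h] using this

theorem coeff_pow_eq_coeff_trunc_pow_add {f : R⟦X⟧} (hf : constantCoeff f = 1) {n : ℕ}
    (hn : 1 ≤ n) (m : ℕ) :
    coeff n (f ^ m) = coeff n ((trunc n f : R⟦X⟧) ^ m) + m * coeff n f := by
  have htrunc : constantCoeff (trunc n f : R⟦X⟧) = 1 := by
    rw [← coeff_zero_eq_constantCoeff, Polynomial.coeff_coe, coeff_trunc,
      if_pos (show 0 < n from hn), coeff_zero_eq_constantCoeff, hf]
  have := coeff_pow_sub_pow_of_sub_eq_X_pow_mul hf htrunc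
    (sub_eq_of_eq_add (eq_X_pow_mul_shift_add_trunc n f)) m
  rw [map_sub, ← coeff_zero_eq_constantCoeff, coeff_mk, zero_add] at this
  linear_combination this

theorem coeff_sub_one_mul_sub_one_mem_span {S : Subring R} {c : R} {G H : R⟦X⟧} {n : ℕ}
    (hG0 : constantCoeff G = 1) (hH0 : constantCoeff H = 1)
    (hG : ∀ k, 1 ≤ k → k < n → coeff k G ∈ Submodule.span S {c})
    (hH : ∀ j, 1 ≤ j → j < n → coeff j H ∈ S) :
    coeff n ((G - 1) * (H - 1)) ∈ Submodule.span S {c} := by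
  rw [coeff_mul]
  refine Submodule.sum_mem _ fun ⟨i, j⟩ hij => ?_
  rw [Finset.HasAntidiagonal.mem_antidiagonal] at hij
  dsimp only
  rcases Nat.eq_zero_or_pos i with rfl | hi
  · simp [hG0]
  rcases Nat.eq_zero_or_pos j with rfl | hj
  · simp [hH0]
  rw [map_sub, map_sub, coeff_one, coeff_one, if_neg hi.ne', if_neg hj.ne', sub_zero, sub_zero,
    mul_comm]
  exact Submodule.smul_mem _ ⟨_, hH j hj (by omega)⟩ (hG i hi (by omega))

theorem exists_map_subtype_eq {S : Subring R} {f : R⟦X⟧} (hf : ∀ j, coeff j f ∈ S) :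
    ∃ f₀ : S⟦X⟧, map S.subtype f₀ = f :=
  ⟨mk fun j => ⟨coeff j f, hf j⟩, by ext; simp⟩

theorem coeff_pow_mem {S : Subring R} {f : R⟦X⟧} (hf : ∀ j, coeff j f ∈ S) (m j : ℕ) :
    coeff j (f ^ m) ∈ S := by
  obtain ⟨f₀, rfl⟩ := exists_map_subtype_eq hf
  rw [← map_pow, coeff_map]
  exact (coeff j (f₀ ^ m)).2

theorem coeff_expand_map_sub_coeff_pow_mem (I : Ideal R) {p : ℕ} [ExpChar (R ⧸ I) p]
    (hp : p ≠ 0) {σ : R →+* R} (hσ : ∀ a, σ a - a ^ p ∈ I) (f : R⟦X⟧) (n : ℕ) :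
    coeff n (expand p hp (map σ f)) - coeff n (f ^ p) ∈ I := by
  have hσ' : (Ideal.Quotient.mk I).comp σ = (frobenius (R ⧸ I) p).comp (Ideal.Quotient.mk I) := by
    ext a
    exact Ideal.Quotient.eq.2 (hσ a)
  rw [← Ideal.Quotient.eq, ← coeff_map, ← coeff_map, map_expand, ← RingHom.comp_apply (map _),
    ← map_comp, hσ', map_comp, RingHom.comp_apply, ← map_expand, map_pow]
  congr 1
  exact MvPowerSeries.map_frobenius_expand p hp

end PowerSeries

theorem coe_mem_span_natCast_iff {K : Type*} [CommRing K] {S : Subring K} {n : ℕ} {x : S} :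
    (x : K) ∈ Submodule.span S {(n : K)} ↔ x ∈ Ideal.span {(n : S)} := by
  rw [Submodule.mem_span_singleton, Ideal.mem_span_singleton']
  refine exists_congr fun a => ?_
  rw [Subtype.ext_iff, Subring.coe_mul, Subring.coe_natCast]
  rfl

theorem mul_mem_span_singleton_iff {K : Type*} [Field K] {S : Subring K} {c a : K} (hc : c ≠ 0) :
    c * a ∈ Submodule.span S {c} ↔ a ∈ S := by
  rw [Submodule.mem_span_singleton]
  constructor
  · rintro ⟨r, hr⟩
    rw [mul_left_cancel₀ hc (hr.symm.trans (mul_comm _ _))]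
    exact r.2
  · exact fun ha => ⟨⟨a, ha⟩, mul_comm _ _⟩

theorem Ideal.exists_notMem_mul_mem_map_of_ramificationIdx'_eq_one {R S : Type*} [CommRing R]
    [CommRing S] [IsDedekindDomain S] [Algebra R S] {p : Ideal R} {P : Ideal S}
    (hpP : p.map (algebraMap R S) ≤ P) (he : ramificationIdx' p P = 1) {x : S} (hx : x ∈ P) :
    ∃ s ∉ P, s * x ∈ p.map (algebraMap R S) := by
  obtain ⟨I, hI⟩ := Ideal.dvd_iff_le.2 hpP
  have hIP : ¬I ≤ P := fun h =>
    (ramificationIdx'_ne_one_iff hpP).2 (by rw [hI, pow_two]; exact mul_mono_right h) he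
  obtain ⟨s, hsI, hsP⟩ := SetLike.not_le_iff_exists.1 hIP
  exact ⟨s, hsP, hI ▸ mul_comm x s ▸ mul_mem_mul hx hsI⟩

theorem coe_ne_zero_of_notMem {K : Type*} [Field K] {𝔭 : Ideal (𝓞 K)} {s : 𝓞 K} (hs : s ∉ 𝔭) :
    (s : K) ≠ 0 :=
  RingOfIntegers.coe_ne_zero_iff.2 fun h => hs (h ▸ 𝔭.zero_mem)

section Localization

variable {K : Type*} [Field K] [NumberField K] (𝔭 : Ideal (𝓞 K)) [h𝔭 : 𝔭.IsPrime]

def localizationSubring : Subring K where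
  carrier := {a | MemLoc 𝔭 1 a}
  zero_mem' := ⟨1, 0, h𝔭.one_notMem, by simp⟩
  one_mem' := ⟨1, 1, h𝔭.one_notMem, by simp⟩
  add_mem' := by
    rintro a b ⟨s, u, hs, hu⟩ ⟨t, v, ht, hv⟩
    refine ⟨s * t, t * u + s * v, h𝔭.mul_notMem hs ht, ?_⟩
    push_cast
    linear_combination (t : K) * hu + (s : K) * hv
  neg_mem' := by
    rintro a ⟨s, u, hs, hu⟩
    exact ⟨s, -u, hs, by push_cast; linear_combination -hu⟩
  mul_mem' := by
    rintro a b ⟨s, u, hs, hu⟩ ⟨t, v, ht, hv⟩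
    refine ⟨s * t, u * v, h𝔭.mul_notMem hs ht, ?_⟩
    push_cast
    linear_combination (t : K) * b * hu + (u : K) * hv

variable {𝔭}

theorem mem_localizationSubring {a : K} : a ∈ localizationSubring 𝔭 ↔ MemLoc 𝔭 1 a := Iff.rfl

theorem coe_mem_localizationSubring (x : 𝓞 K) : (x : K) ∈ localizationSubring 𝔭 :=
  ⟨1, x, h𝔭.one_notMem, by simp⟩

theorem inv_coe_mem_localizationSubring {s : 𝓞 K} (hs : s ∉ 𝔭) :
    (s : K)⁻¹ ∈ localizationSubring 𝔭 :=
  ⟨s, 1, hs, by simp [coe_ne_zero_of_notMem hs]⟩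

theorem memLoc_iff_mem_span {c a : K} :
    MemLoc 𝔭 c a ↔ a ∈ Submodule.span (localizationSubring 𝔭) {c} := by
  rw [Submodule.mem_span_singleton]
  constructor
  · rintro ⟨s, u, hs, hu⟩
    refine ⟨⟨(s : K)⁻¹ * u, mul_mem (inv_coe_mem_localizationSubring hs)
      (coe_mem_localizationSubring u)⟩, ?_⟩
    have hs0 := coe_ne_zero_of_notMem hs
    change (s : K)⁻¹ * u * c = a
    field_simp
    linear_combination -hu
  · rintro ⟨⟨r, s, u, hs, hu⟩, rfl⟩
    refine ⟨s, u, hs, ?_⟩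
    change (s : K) * (r * c) = c * u
    linear_combination c * hu

theorem not_isUnit_natCast_localizationSubring {p : ℕ} (h𝔭p : (p : 𝓞 K) ∈ 𝔭) :
    ¬IsUnit (p : localizationSubring 𝔭) := by
  rintro hunit
  obtain ⟨⟨v, s, u, hs, hu⟩, hpv⟩ := isUnit_iff_exists_inv.1 hunit
  have hpv : (p : K) * v = 1 := congrArg Subtype.val hpv
  have : s = p * u := RingOfIntegers.coe_injective <| by
    push_cast
    linear_combination (p : K) * hu - (s : K) * hpv
  exact hs (this ▸ Ideal.mul_mem_right _ _ h𝔭p)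

end Localization

section Frobenius

variable {K : Type*} [Field K] [NumberField K] {𝔭 : Ideal (𝓞 K)} [h𝔭 : 𝔭.IsPrime] {p : ℕ}

theorem coe_mem_span_of_ramificationIdx'_eq_one
    (hunram : Ideal.ramificationIdx' (Ideal.span {(p : ℤ)}) 𝔭 = 1) (h𝔭p : (p : 𝓞 K) ∈ 𝔭)
    {x : 𝓞 K} (hx : x ∈ 𝔭) : (x : K) ∈ Submodule.span (localizationSubring 𝔭) {(p : K)} := by
  have hmap : (Ideal.span {(p : ℤ)}).map (algebraMap ℤ (𝓞 K)) = Ideal.span {(p : 𝓞 K)} := by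
    rw [Ideal.map_span, Set.image_singleton, map_natCast]
  obtain ⟨s, hs, hsx⟩ := Ideal.exists_notMem_mul_mem_map_of_ramificationIdx'_eq_one
    (hmap ▸ (Ideal.span_singleton_le_iff_mem _).2 h𝔭p) hunram hx
  obtain ⟨u, hu⟩ := Ideal.mem_span_singleton'.1 (hmap ▸ hsx)
  refine memLoc_iff_mem_span.1 ⟨s, u, hs, ?_⟩
  rw [mul_comm (p : K)]
  exact_mod_cast hu.symm

theorem sub_pow_mem_span_of_isFrobAt
    (hunram : Ideal.ramificationIdx' (Ideal.span {(p : ℤ)}) 𝔭 = 1) (h𝔭p : (p : 𝓞 K) ∈ 𝔭)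
    {τ : K ≃ₐ[ℚ] K} (hτ : IsFrobAt τ 𝔭 p) {a : K} (ha : a ∈ localizationSubring 𝔭) :
    τ a - a ^ p ∈ Submodule.span (localizationSubring 𝔭) {(p : K)} := by
  obtain ⟨s, u, hs, hu⟩ := ha
  obtain ⟨ys, hys, hys𝔭⟩ := hτ s
  obtain ⟨yu, hyu, hyu𝔭⟩ := hτ u
  have hsp : s ^ p ∉ 𝔭 := fun h => hs (h𝔭.mem_of_pow_mem _ h)
  have ht : s ^ p + ys ∉ 𝔭 := fun h => hsp ((Ideal.add_mem_iff_left _ hys𝔭).1 h)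
  have hτa : ((s ^ p + ys : 𝓞 K) : K) * τ a = (u : K) ^ p + yu := by
    have := congrArg τ hu
    rw [map_mul, map_mul, map_one, one_mul] at this
    push_cast
    linear_combination this + hys * τ a - hyu
  have hap : (s : K) ^ p * a ^ p = (u : K) ^ p := by rw [← mul_pow, hu, one_mul]
  have key : τ a - a ^ p = ((s ^ p + ys : 𝓞 K) : K)⁻¹ * ((s ^ p : 𝓞 K) : K)⁻¹ *
      ((s ^ p * yu - u ^ p * ys : 𝓞 K) : K) := by
    rw [eq_comm, mul_assoc, inv_mul_eq_iff_eq_mul₀ (coe_ne_zero_of_notMem ht),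
      inv_mul_eq_iff_eq_mul₀ (coe_ne_zero_of_notMem hsp)]
    push_cast at hτa ⊢
    linear_combination -(s : K) ^ p * hτa + ((s : K) ^ p + ys) * hap
  rw [key]
  exact Submodule.smul_mem _
    ⟨_, mul_mem (inv_coe_mem_localizationSubring ht) (inv_coe_mem_localizationSubring hsp)⟩
    (coe_mem_span_of_ramificationIdx'_eq_one hunram h𝔭p
      (Ideal.sub_mem _ (Ideal.mul_mem_left _ _ hyu𝔭) (Ideal.mul_mem_left _ _ hys𝔭)))

theorem coeff_expand_map_sub_coeff_pow_mem_span (hp : p.Prime)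
    (hunram : Ideal.ramificationIdx' (Ideal.span {(p : ℤ)}) 𝔭 = 1) (h𝔭p : (p : 𝓞 K) ∈ 𝔭)
    {τ : K ≃ₐ[ℚ] K} (hτ : IsFrobAt τ 𝔭 p) {f : K⟦X⟧}
    (hf : ∀ j, coeff j f ∈ localizationSubring 𝔭) (n : ℕ) :
    coeff n (expand p hp.ne_zero (map (τ : K →+* K) f)) - coeff n (f ^ p) ∈
      Submodule.span (localizationSubring 𝔭) {(p : K)} := by
  have hτM a (ha : a ∈ localizationSubring 𝔭) := sub_pow_mem_span_of_isFrobAt hunram h𝔭p hτ ha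
  have hτR a (ha : a ∈ localizationSubring 𝔭) : τ a ∈ localizationSubring 𝔭 := by
    obtain ⟨r, hr⟩ := Submodule.mem_span_singleton.1 (hτM a ha)
    rw [← sub_add_cancel (τ a) (a ^ p), ← hr]
    exact add_mem (mul_mem r.2 (natCast_mem _ p)) (pow_mem ha p)
  let σ := (τ : K →+* K).restrict (localizationSubring 𝔭) (localizationSubring 𝔭) hτR
  have : Fact p.Prime := ⟨hp⟩
  have := CharP.quotient (localizationSubring 𝔭) p (not_isUnit_natCast_localizationSubring h𝔭p)
  obtain ⟨f₀, rfl⟩ := exists_map_subtype_eq hf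
  have hσ : (τ : K →+* K).comp (localizationSubring 𝔭).subtype =
      (localizationSubring 𝔭).subtype.comp σ := rfl
  rw [← RingHom.comp_apply (map _), ← map_comp, hσ, map_comp, RingHom.comp_apply, ← map_expand,
    ← map_pow, coeff_map, coeff_map, ← map_sub]
  exact coe_mem_span_natCast_iff.2 (coeff_expand_map_sub_coeff_pow_mem _ hp.ne_zero
    (σ := σ) (fun a => coe_mem_span_natCast_iff.1 (hτM a a.2)) f₀ n)

theorem coeff_add_mul_coeff_mem_span (hp : p.Prime)
    (hunram : Ideal.ramificationIdx' (Ideal.span {(p : ℤ)}) 𝔭 = 1) (h𝔭p : (p : 𝓞 K) ∈ 𝔭)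
    {τ : K ≃ₐ[ℚ] K} (hτ : IsFrobAt τ 𝔭 p) {F G : K⟦X⟧} (hF0 : constantCoeff F = 1)
    (hG0 : constantCoeff G = 1) (hGF : G * F ^ p = expand p hp.ne_zero (map (τ : K →+* K) F))
    {n : ℕ} (hn : 1 ≤ n) (hF : ∀ j < n, coeff j F ∈ localizationSubring 𝔭)
    (hG : ∀ k, 1 ≤ k → k < n → coeff k G ∈ Submodule.span (localizationSubring 𝔭) {(p : K)}) :
    coeff n G + p * coeff n F ∈ Submodule.span (localizationSubring 𝔭) {(p : K)} := by
  set P : K⟦X⟧ := ((trunc n F : Polynomial K) : K⟦X⟧)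
  have hP j : coeff j P ∈ localizationSubring 𝔭 := by
    rw [Polynomial.coeff_coe, coeff_trunc]
    split_ifs with h
    exacts [hF j h, zero_mem _]
  have hτP : coeff n (expand p hp.ne_zero (map (τ : K →+* K) F)) =
      coeff n (expand p hp.ne_zero (map (τ : K →+* K) P)) := by
    simp only [coeff_expand, coeff_map, P, Polynomial.coeff_coe, coeff_trunc,
      Nat.div_lt_self hn hp.one_lt, if_true]
  have hpow : coeff n (F ^ p) = coeff n (P ^ p) + p * coeff n F :=
    coeff_pow_eq_coeff_trunc_pow_add hF0 hn p
  have hrec : coeff n (expand p hp.ne_zero (map (τ : K →+* K) F)) - coeff n (F ^ p) =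
      coeff n G + coeff n ((G - 1) * (F ^ p - 1)) := by
    rw [← hGF, ← map_sub, show G * F ^ p - F ^ p = (G - 1) + (G - 1) * (F ^ p - 1) by ring,
      map_add, map_sub, coeff_one, if_neg (show n ≠ 0 by omega), sub_zero]
  have hsum : coeff n ((G - 1) * (F ^ p - 1)) ∈
      Submodule.span (localizationSubring 𝔭) {(p : K)} :=
    coeff_sub_one_mul_sub_one_mem_span hG0 (by simp [hF0]) hG
      fun j _ hj => by rw [← coeff_trunc_pow_of_lt hj]; exact coeff_pow_mem hP p j
  have key : coeff n G + p * coeff n F =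
      (coeff n (expand p hp.ne_zero (map (τ : K →+* K) P)) - coeff n (P ^ p)) -
        coeff n ((G - 1) * (F ^ p - 1)) := by
    linear_combination hτP - hpow - hrec
  rw [key]
  exact sub_mem (coeff_expand_map_sub_coeff_pow_mem_span hp hunram h𝔭p hτ hP n) hsum

end Frobenius

theorem dieudonne_dwork_general
    (K : Type*) [Field K] [NumberField K]
    (p : ℕ) (hp : p.Prime)
    (hunram : ∀ 𝔮 : Ideal (𝓞 K), 𝔮.IsPrime → (p : 𝓞 K) ∈ 𝔮 →
      Ideal.ramificationIdx' (Ideal.span {(p : ℤ)}) 𝔮 = 1)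
    (𝔭 : Ideal (𝓞 K)) (h𝔭 : 𝔭.IsPrime) (h𝔭p : (p : 𝓞 K) ∈ 𝔭)
    (τ : K ≃ₐ[ℚ] K) (hτ : IsFrobAt τ 𝔭 p)
    (F : PowerSeries K) (hF0 : constantCoeff F = 1)
    (G : PowerSeries K)
    (hG : G = (mk fun n : ℕ => if p ∣ n then τ (coeff (n / p) F) else 0) * (F ^ p)⁻¹) :
    (∀ n : ℕ, MemLoc 𝔭 1 (coeff n F)) ↔
      (constantCoeff G = 1 ∧ ∀ n : ℕ, 1 ≤ n → MemLoc 𝔭 ((p : ℕ) : K) (coeff n G)) := by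
  have hGF : G * F ^ p = expand p hp.ne_zero (map (τ : K →+* K) F) := by
    have hFτ : (mk fun n : ℕ => if p ∣ n then τ (coeff (n / p) F) else 0) =
        expand p hp.ne_zero (map (τ : K →+* K) F) := by
      ext n
      simp [coeff_expand]
    rw [hG, hFτ, mul_assoc, PowerSeries.inv_mul_cancel _ (by simp [hF0]), mul_one]
  have hG0 : constantCoeff G = 1 := by
    have h := congrArg constantCoeff hGF
    rw [map_mul, map_pow, hF0, one_pow, mul_one, constantCoeff_expand] at h
    rw [h, ← coeff_zero_eq_constantCoeff, coeff_map, coeff_zero_eq_constantCoeff, hF0, map_one]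
  simp_rw [← mem_localizationSubring]
  simp only [memLoc_iff_mem_span, hG0, true_and]
  refine forall_iff_forall_pos_of_step (by simp [hF0]) fun n hn hF hG => ?_
  rw [← mul_mem_span_singleton_iff (Nat.cast_ne_zero.2 hp.ne_zero)]
  have := coeff_add_mul_coeff_mem_span hp (hunram 𝔭 h𝔭 h𝔭p) h𝔭p hτ hF0 hG0 hGF hn hF hG
  exact ⟨fun h => (add_mem_cancel_right h).1 this, fun h => (add_mem_cancel_left h).1 this⟩

/-- The Dieudonné–Dwork lemma over number fields: with `τ` a Frobenius automorphism at an
unramified prime `𝔭` above `p`, and `F ∈ 1 + x·K[[x]]`, all coefficients of `F` lie in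
`𝓞_{K,𝔭}` if and only if `F^τ(x^p)/F(x)^p ∈ 1 + p·x·𝓞_{K,𝔭}[[x]]`. -/
theorem dieudonne_dwork
    (K : Type*) [Field K] [NumberField K] [IsGalois ℚ K]
    (p : ℕ) (hp : p.Prime)
    (hunram : ∀ 𝔮 : Ideal (𝓞 K), 𝔮.IsPrime → (p : 𝓞 K) ∈ 𝔮 →
      Ideal.ramificationIdx' (Ideal.span {(p : ℤ)}) 𝔮 = 1)
    (𝔭 : Ideal (𝓞 K)) (h𝔭 : 𝔭.IsPrime) (h𝔭0 : 𝔭 ≠ ⊥) (h𝔭p : (p : 𝓞 K) ∈ 𝔭)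
    (τ : K ≃ₐ[ℚ] K) (hτ : IsFrobAt τ 𝔭 p)
    (F : PowerSeries K) (hF0 : constantCoeff F = 1)
    (G : PowerSeries K)
    (hG : G = (mk fun n : ℕ => if p ∣ n then τ (coeff (n / p) F) else 0) * (F ^ p)⁻¹) :
    (∀ n : ℕ, MemLoc 𝔭 1 (coeff n F)) ↔
      (constantCoeff G = 1 ∧ ∀ n : ℕ, 1 ≤ n → MemLoc 𝔭 ((p : ℕ) : K) (coeff n G)) :=
  dieudonne_dwork_general K p hp hunram 𝔭 h𝔭 h𝔭p τ hτ F hF0 G hG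
end

section
/- Let X be a set and f : X → X a map such that, for every positive integer n, the set Fix(f^n) of fixed points of the n-th iterate of f is finite. Then for every positive integer n, the integer n divides Σ_{d | n} μ(n/d)·|Fix(f^d)|, where μ is the Möbius function and the sum is over the positive divisors d of n. (Indeed this sum equals n times the number of orbits of f of exact size n.) -/
/-!
Sorting the fixed points of `f^[n]` by their minimal period gives
`|Fix(f^n)| = ∑_{d ∣ n} P d`, where `P d` counts the points of minimal period `d`, so by Möbius
inversion the sum in question is `P n`. Iterating `f` makes `ZMod n` act freely on the points of
minimal period `n`, hence every orbit has `n` elements and `n ∣ P n`.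
-/

theorem AddAction.card_addGroup_dvd_card_of_stabilizer_eq_bot {G α : Type*} [AddGroup G]
    [AddAction G α] (h : ∀ a : α, AddAction.stabilizer G a = ⊥) :
    Nat.card G ∣ Nat.card α := by
  rw [Nat.card_congr (AddAction.selfEquivOrbitsQuotientProd h), Nat.card_prod]
  exact dvd_mul_left _ _

namespace Function

variable {X : Type*} (f : X → X)

theorem minimalPeriod_iterate_apply_of_minimalPeriod_eq {n : ℕ} [NeZero n] {x : X}
    (hx : minimalPeriod f x = n) (k : ℕ) : minimalPeriod f (f^[k] x) = n := by
  rwa [minimalPeriod_apply_iterate]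
  exact minimalPeriod_pos_iff_mem_periodicPts.1 (hx ▸ NeZero.pos n)

instance addActionZModMinimalPeriod (n : ℕ) [NeZero n] :
    AddAction (ZMod n) {x : X // minimalPeriod f x = n} where
  vadd k x := ⟨f^[k.val] x, minimalPeriod_iterate_apply_of_minimalPeriod_eq f x.2 k.val⟩
  zero_vadd x := Subtype.ext <| by
    change f^[(0 : ZMod n).val] x.1 = x.1
    rw [ZMod.val_zero, iterate_zero_apply]
  add_vadd a b x := Subtype.ext <| by
    change f^[(a + b).val] x.1 = f^[a.val] (f^[b.val] x.1)
    have hper : IsPeriodicPt f n x.1 := isPeriodicPt_iff_minimalPeriod_dvd.2 x.2.dvd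
    rw [ZMod.val_add, hper.iterate_mod_apply, iterate_add_apply]

theorem stabilizer_zmod_minimalPeriod_eq_bot {n : ℕ} [NeZero n]
    (x : {x : X // minimalPeriod f x = n}) : AddAction.stabilizer (ZMod n) x = ⊥ := by
  refine (AddSubgroup.eq_bot_iff_forall _).2 fun k hk => ?_
  have hper : IsPeriodicPt f k.val x.1 := congrArg Subtype.val (AddAction.mem_stabilizer_iff.1 hk)
  have hdvd := hper.minimalPeriod_dvd
  rw [x.2] at hdvd
  rw [← ZMod.val_eq_zero]
  exact Nat.eq_zero_of_dvd_of_lt hdvd (ZMod.val_lt k)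

/-- No finiteness is needed: `Nat.card` of an infinite type is `0`. -/
theorem dvd_card_minimalPeriod_eq {n : ℕ} (hn : 0 < n) :
    n ∣ Nat.card {x : X // minimalPeriod f x = n} := by
  have : NeZero n := ⟨hn.ne'⟩
  simpa only [Nat.card_zmod] using AddAction.card_addGroup_dvd_card_of_stabilizer_eq_bot
    (stabilizer_zmod_minimalPeriod_eq_bot f (n := n))

noncomputable def ptsOfPeriodEquivSigmaMinimalPeriod {n : ℕ} (hn : 0 < n) :
    ptsOfPeriod f n ≃ Σ d : n.divisors, {x : X // minimalPeriod f x = d} where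
  toFun x := ⟨⟨minimalPeriod f x,
    Nat.mem_divisors.2 ⟨IsPeriodicPt.minimalPeriod_dvd x.2, hn.ne'⟩⟩, x, rfl⟩
  invFun p := ⟨p.2, isPeriodicPt_iff_minimalPeriod_dvd.2
    (p.2.2.dvd.trans (Nat.dvd_of_mem_divisors p.1.2))⟩
  left_inv _ := rfl
  right_inv p := Sigma.subtype_ext (Subtype.ext p.2.2) rfl

theorem card_ptsOfPeriod_eq_sum_card_minimalPeriod_eq {n : ℕ} (hn : 0 < n)
    (hfin : (ptsOfPeriod f n).Finite) :
    Nat.card (ptsOfPeriod f n) =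
      ∑ d ∈ n.divisors, Nat.card {x : X // minimalPeriod f x = d} := by
  have (d : n.divisors) : Finite {x : X // minimalPeriod f x = d} :=
    (hfin.subset fun x (hx : minimalPeriod f x = d) => isPeriodicPt_iff_minimalPeriod_dvd.2
      (hx ▸ Nat.dvd_of_mem_divisors d.2)).to_subtype
  rw [Nat.card_congr (ptsOfPeriodEquivSigmaMinimalPeriod f hn), Nat.card_sigma,
    Finset.sum_coe_sort n.divisors fun d => Nat.card {x : X // minimalPeriod f x = d}]

theorem sum_moebius_mul_card_ptsOfPeriod {n : ℕ} (hn : 0 < n)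
    (hfin : ∀ m, 0 < m → (ptsOfPeriod f m).Finite) :
    ∑ d ∈ n.divisors, ArithmeticFunction.moebius (n / d) * (Nat.card (ptsOfPeriod f d) : ℤ) =
      Nat.card {x : X // minimalPeriod f x = n} := by
  rw [← Nat.sum_divisorsAntidiagonal' fun a b =>
    (ArithmeticFunction.moebius a : ℤ) * Nat.card (ptsOfPeriod f b)]
  have hinv := (ArithmeticFunction.sum_eq_iff_sum_smul_moebius_eq
    (f := fun d => (Nat.card {x : X // minimalPeriod f x = d} : ℤ))
    (g := fun m => (Nat.card (ptsOfPeriod f m) : ℤ))).1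
    (fun m hm => by
      exact_mod_cast (card_ptsOfPeriod_eq_sum_card_minimalPeriod_eq f hm (hfin m hm)).symm) n hn
  simpa only [smul_eq_mul] using hinv

end Function

/-- If every iterate of `f : X → X` has finitely many fixed points, then for every `n ≥ 1`,
`n` divides `Σ_{d ∣ n} μ(n/d)·|Fix(f^d)|`. -/
theorem moebius_fixed_points_divisible
    (X : Type*) (f : X → X)
    (hfin : ∀ n : ℕ, 0 < n → {x : X | f^[n] x = x}.Finite)
    (n : ℕ) (hn : 0 < n) :
    (n : ℤ) ∣ ∑ d ∈ n.divisors,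
      ArithmeticFunction.moebius (n / d) * (Nat.card {x : X // f^[d] x = x} : ℤ) := by
  have hdvd : (n : ℤ) ∣ Nat.card {x : X // Function.minimalPeriod f x = n} :=
    Int.natCast_dvd_natCast.2 (Function.dvd_card_minimalPeriod_eq f hn)
  exact hdvd.trans (Function.sum_moebius_mul_card_ptsOfPeriod f hn hfin).symm.dvd
end

section
/- Let K be a finite Galois extension of ℚ, let (a_n)_{n≥0} be a K-valued sequence with the Cartier property, and let λ be a positive integer such that λ^n·a_n ∈ 𝓞_K for every n ≥ 0. Then the rescaled sequence (λ^n·a_n)_{n≥0} also has the Cartier property: for all but finitely many nonzero prime ideals 𝔭 of 𝓞_K, with p the rational prime lying under 𝔭, there exists a Frobenius automorphism τ at 𝔭 such that λ^{np}·a_{np} − τ(λ^n·a_n) ∈ p·𝓞_{K,𝔭} for all n ≥ 0. -/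
open NumberField

/-- The Cartier property for an `ℕ`-indexed sequence in a Galois number field. -/
def HasCartierPropertyNat {K : Type*} [Field K] [NumberField K] (a : ℕ → K) : Prop :=
  {𝔭 : Ideal (𝓞 K) | 𝔭.IsPrime ∧ 𝔭 ≠ ⊥ ∧
    ¬ ∀ p : ℕ, p.Prime → (p : 𝓞 K) ∈ 𝔭 →
      ∃ τ : K ≃ₐ[ℚ] K, IsFrobAt τ 𝔭 p ∧
        ∀ n : ℕ, MemLoc 𝔭 ((p : ℕ) : K) (a (n * p) - τ (a n))}.Finite

lemma memLoc_add {K : Type*} [Field K] [NumberField K]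
    {𝔭 : Ideal (𝓞 K)} (hP : 𝔭.IsPrime) {c a b : K}
    (h1 : MemLoc 𝔭 c a) (h2 : MemLoc 𝔭 c b) : MemLoc 𝔭 c (a + b) := by
  obtain ⟨s1, u1, hs1, he1⟩ := h1
  obtain ⟨s2, u2, hs2, he2⟩ := h2
  refine ⟨s1 * s2, s2 * u1 + s1 * u2, fun h => (hP.mem_or_mem h).elim hs1 hs2, ?_⟩
  push_cast
  ring_nf
  linear_combination (s2 : K) * he1 + (s1 : K) * he2

/-- If `(a_n)_{n≥0}` has the Cartier property and `λ` is a positive integer with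
`λⁿ·a_n ∈ 𝓞_K` for every `n`, then `(λⁿ·a_n)_{n≥0}` also has the Cartier property. -/
theorem cartier_property_rescale
    (K : Type*) [Field K] [NumberField K] [IsGalois ℚ K]
    (a : ℕ → K) (hC : HasCartierPropertyNat a)
    (lam : ℕ) (hlam : 0 < lam)
    (hint : ∀ n : ℕ, ∃ u : 𝓞 K, ((lam : K)) ^ n * a n = (u : K)) :
    HasCartierPropertyNat (fun n : ℕ => (lam : K) ^ n * a n) := by
  classical
  have hlam0 : (lam : 𝓞 K) ≠ 0 := by
    exact_mod_cast Nat.cast_ne_zero.mpr hlam.ne'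
  -- finitely many primes contain lam
  have hspan : (Ideal.span {(lam : 𝓞 K)} : Ideal (𝓞 K)) ≠ 0 := by
    simp [Ideal.span_singleton_eq_bot, hlam0]
  have hTfin : {𝔭 : Ideal (𝓞 K) | 𝔭.IsPrime ∧ 𝔭 ≠ ⊥ ∧ (lam : 𝓞 K) ∈ 𝔭}.Finite := by
    have h := Ideal.finite_factors hspan
    have : {𝔭 : Ideal (𝓞 K) | 𝔭.IsPrime ∧ 𝔭 ≠ ⊥ ∧ (lam : 𝓞 K) ∈ 𝔭} ⊆
        (fun v : IsDedekindDomain.HeightOneSpectrum (𝓞 K) => v.asIdeal) ''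
          {v | v.asIdeal ∣ Ideal.span {(lam : 𝓞 K)}} := by
      rintro 𝔭 ⟨h1, h2, h3⟩
      exact ⟨⟨𝔭, h1, h2⟩, by
        simpa [Ideal.dvd_span_singleton] using h3, rfl⟩
    exact Set.Finite.subset (h.image _) this
  refine Set.Finite.subset (hC.union hTfin) ?_
  rintro 𝔭 ⟨hP, hne, hbad⟩
  by_contra hmem
  push_neg at hmem
  simp only [Set.mem_union, Set.mem_setOf_eq, not_or, not_and] at hmem
  obtain ⟨hm1, hm2⟩ := hmem
  have hgood' : ∀ p : ℕ, p.Prime → (p : 𝓞 K) ∈ 𝔭 →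
      ∃ τ : K ≃ₐ[ℚ] K, IsFrobAt τ 𝔭 p ∧
        ∀ n : ℕ, MemLoc 𝔭 ((p : ℕ) : K) (a (n * p) - τ (a n)) := by
    have h := hm1 hP hne
    push_neg at h
    intro p hp hpm
    obtain ⟨τ, hτ, hall⟩ := h p hp hpm
    exact ⟨τ, hτ, hall⟩
  have hlamnot : (lam : 𝓞 K) ∉ 𝔭 := fun h => hm2 hP hne h
  apply hbad
  intro p hp hpmem
  obtain ⟨τ, hτ, hML⟩ := hgood' p hp hpmem
  refine ⟨τ, hτ, ?_⟩
  intro n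
  haveI : Fact p.Prime := ⟨hp⟩
  -- τ fixes rational integers
  have hτlam : ∀ m : ℕ, τ ((lam : K) ^ m) = (lam : K) ^ m := by
    intro m; rw [map_pow, map_natCast]
  have key : (fun n : ℕ => (lam : K) ^ n * a n) (n * p) -
      τ ((fun n : ℕ => (lam : K) ^ n * a n) n)
      = (lam : K) ^ (n * p) * (a (n * p) - τ (a n))
        + ((lam : K) ^ (n * p) - (lam : K) ^ n) * τ (a n) := by
    simp only [map_mul, hτlam]
    ring
  rw [key]
  apply memLoc_add hP
  · -- first term
    obtain ⟨s, u, hs, he⟩ := hML n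
    refine ⟨s, (lam : 𝓞 K) ^ (n * p) * u, hs, ?_⟩
    push_cast
    linear_combination ((lam : K) ^ (n * p)) * he
  · -- second term
    -- lam^(n*p) ≡ lam^n mod p
    have hdvd : (p : ℤ) ∣ ((lam : ℤ) ^ (n * p) - (lam : ℤ) ^ n) := by
      have h3 : ((((lam : ℤ) ^ (n * p) - (lam : ℤ) ^ n : ℤ)) : ZMod p) = 0 := by
        push_cast
        rw [mul_comm n p, pow_mul, ZMod.pow_card]
        ring
      exact (ZMod.intCast_zmod_eq_zero_iff_dvd _ p).mp h3
    obtain ⟨m, hm⟩ := hdvd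
    obtain ⟨u, hu⟩ := hint n
    -- v := τ(u) as an element of 𝓞 K
    have hv : IsIntegral ℤ (τ (u : K)) := by
      have := u.2
      exact (IsIntegral.map (τ.toRingEquiv.toRingHom.toIntAlgHom) this)
    refine ⟨(lam : 𝓞 K) ^ n, (m : 𝓞 K) * ⟨τ (u : K), hv⟩,
      fun h => hlamnot (hP.mem_of_pow_mem n h), ?_⟩
    have hτu : τ ((lam : K) ^ n * a n) = τ (u : K) := by rw [hu]
    rw [map_mul, hτlam] at hτu
    have hmK : (lam : K) ^ (n * p) - (lam : K) ^ n = (p : K) * (m : K) := by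
      have := congrArg (fun z : ℤ => (z : K)) hm
      push_cast at this
      linear_combination this
    push_cast
    calc (lam : K) ^ n * (((lam : K) ^ (n * p) - (lam : K) ^ n) * τ (a n))
        = ((lam : K) ^ (n * p) - (lam : K) ^ n) * ((lam : K) ^ n * τ (a n)) := by ring
      _ = ((p : K) * (m : K)) * τ (u : K) := by rw [hmK, hτu]
      _ = (p : K) * ((m : K) * τ (u : K)) := by ring
end
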